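/- arXiv:1909.02652 — 4 statements merged into one kernel-verified Lean document; each statement's English description precedes it below -/
import Mathlib

section
/- Let (R_j) be a sequence of positive reals with R_1 ≥ 1 and R_{j+1} ≥ 4R_j² for all j, let n_j ≥ 3 be integers and l_j ≤ R_j. Then for every k and every complex z with |z| ≤ 4R_k, one has |∏_{j=k+1}^∞ (1 - (1/2)(z/R_j)^{n_j})^{l_j}| ≤ 1 + 8/R_k. -/
lemma exp3215 : Real.exp (32/15) ≤ 9 := by
  have h1 : Real.exp (32/15) ^ (15:ℕ) ≤ 9 ^ (15:ℕ) := by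
    rw [← Real.exp_nat_mul]
    have : ((15:ℕ):ℝ) * (32/15) = 32 := by norm_num
    rw [this]
    calc Real.exp 32 = Real.exp 1 ^ (32:ℕ) := by
            rw [← Real.exp_nat_mul]; norm_num
      _ ≤ (2.7182818286:ℝ) ^ (32:ℕ) :=
            pow_le_pow_left₀ (Real.exp_pos 1).le Real.exp_one_lt_d9.le 32
      _ ≤ 9 ^ (15:ℕ) := by norm_num
  exact le_of_pow_le_pow_left₀ (by norm_num) (by norm_num) h1

lemma exp_small (b : ℝ) (hb : 1 ≤ b) : Real.exp (32/(15*b)) ≤ 1 + 8/b := by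
  have hb0 : 0 < b := by linarith
  set t : ℝ := 1/b with ht
  have ht0 : 0 ≤ t := by positivity
  have ht1 : t ≤ 1 := by rw [ht]; rw [div_le_one hb0]; linarith
  have key := convexOn_exp.2 (Set.mem_univ (0:ℝ)) (Set.mem_univ (32/15:ℝ))
      (by linarith : (0:ℝ) ≤ 1 - t) ht0 (by ring)
  simp only [smul_eq_mul, mul_zero, zero_add, Real.exp_zero, mul_one] at key
  have h1 : t * (32/15) = 32/(15*b) := by rw [ht]; ring
  rw [h1] at key
  have h2 : t * Real.exp (32/15) ≤ t * 9 := by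
    exact mul_le_mul_of_nonneg_left exp3215 ht0
  have : (1 - t) + t * 9 = 1 + 8 * t := by ring
  calc Real.exp (32/(15*b)) ≤ (1-t) + t * Real.exp (32/15) := key
    _ ≤ (1-t) + t * 9 := by linarith
    _ = 1 + 8 * t := by ring
    _ = 1 + 8/b := by rw [ht]; ring

/-- Tail estimate: for `|z| ≤ 4 R_k`, the tail product `∏_{j ≥ k+1} F_j(z)` has
modulus at most `1 + 8/R_k`. -/
theorem stmt5 (R : ℕ → ℝ) (n l : ℕ → ℕ) (hpos : ∀ j, 0 < R j) (hR1 : 1 ≤ R 1)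
    (hRrec : ∀ j, 1 ≤ j → 4 * (R j)^2 ≤ R (j+1))
    (hn : ∀ j, 1 ≤ j → 3 ≤ n j) (hl : ∀ j, 1 ≤ j → (l j : ℝ) ≤ R j) :
    ∀ k, 1 ≤ k → ∀ z : ℂ, ‖z‖ ≤ 4 * R k →
      ‖∏' i : ℕ, (1 - (1/2) * (z / (R (k+1+i) : ℂ)) ^ (n (k+1+i))) ^ (l (k+1+i))‖
        ≤ 1 + 8 / R k := by
  intro k hk z hz
  have hRk : 0 < R k := hpos k
  set F : ℕ → ℂ := fun i =>
    (1 - (1/2) * (z / (R (k+1+i) : ℂ)) ^ (n (k+1+i))) ^ (l (k+1+i)) with hFdef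
  show ‖∏' i, F i‖ ≤ 1 + 8 / R k
  by_cases hmul : Multipliable F
  · -- main case
    have hge1' : ∀ m : ℕ, 1 ≤ R (m+1) := by
      intro m
      induction m with
      | zero => exact hR1
      | succ p ih =>
        have h := hRrec (p+1) (by omega)
        nlinarith [hpos (p+1)]
    have hge1 : ∀ j, 1 ≤ j → 1 ≤ R j := by
      intro j hj
      obtain ⟨m, rfl⟩ : ∃ m, j = m + 1 := ⟨j - 1, by omega⟩
      exact hge1' m
    have hRk1 : 1 ≤ R k := hge1 k hk
    -- the key growth estimate
    have hsq : ∀ i : ℕ, 16 * (16:ℝ)^i * (R k)^4 ≤ (R (k+1+i))^2 := by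
      intro i
      induction i with
      | zero =>
        have h := hRrec k hk
        simp only [pow_zero, mul_one]
        nlinarith [hRk, sq_nonneg (R k)]
      | succ i ih =>
        have h := hRrec (k+1+i) (by omega)
        have h1 : 1 ≤ R (k+1+i) := hge1 _ (by omega)
        have ha : 0 < R (k+1+i) := hpos _
        have ht : (0:ℝ) < 16^i := by positivity
        have step : k+1+(i+1) = (k+1+i)+1 := by omega
        rw [step]
        calc 16 * (16:ℝ)^(i+1) * (R k)^4
            = 16 * (16 * (16:ℝ)^i * (R k)^4) := by ring
          _ ≤ 16 * ((R (k+1+i))^2 * (R (k+1+i))^2) := by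
              have ha2 : 1 ≤ (R (k+1+i))^2 := by nlinarith
              have := mul_le_mul ih ha2 zero_le_one (by positivity)
              nlinarith [this]
          _ = (4 * (R (k+1+i))^2)^2 := by ring
          _ ≤ (R ((k+1+i)+1))^2 := by
              apply pow_le_pow_left₀ (by positivity) h
    have hR4 : ∀ i : ℕ, 4 * R k ≤ R (k+1+i) := by
      intro i
      have h2 : (4 * R k)^2 ≤ (R (k+1+i))^2 := by
        have := hsq i
        have h16 : (1:ℝ) ≤ 16^i := by
          calc (1:ℝ) = 1^i := (one_pow i).symm
            _ ≤ 16^i := pow_le_pow_left₀ (by norm_num) (by norm_num) i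
        calc (4 * R k)^2 = 16 * R k^2 := by ring
          _ ≤ 16 * R k^4 := by
              have h2 : 1 ≤ R k^2 := by nlinarith
              nlinarith [mul_le_mul_of_nonneg_left h2 (sq_nonneg (R k))]
          _ ≤ 16 * 16^i * R k^4 := by nlinarith [mul_le_mul_of_nonneg_right h16 (show (0:ℝ) ≤ 16 * R k^4 by positivity)]
          _ ≤ (R (k+1+i))^2 := hsq i
      exact le_of_pow_le_pow_left₀ (by norm_num) (hpos _).le h2
    -- per-factor bound
    set c : ℕ → ℝ := fun i => 2 / R k * (1/16)^i with hcdef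
    have hc0 : ∀ i, 0 ≤ c i := by intro i; positivity
    have hFle : ∀ i, ‖F i‖ ≤ Real.exp (c i) := by
      intro i
      have hj1 : 1 ≤ k+1+i := by omega
      have hRj : 0 < R (k+1+i) := hpos _
      have hRj1 : 1 ≤ R (k+1+i) := hge1 _ hj1
      set a : ℝ := R (k+1+i) with hadef
      have hw : ‖z / (R (k+1+i) : ℂ)‖ ≤ 4 * R k / a := by
        rw [norm_div, Complex.norm_real, Real.norm_eq_abs, abs_of_pos hRj]
        gcongr
      have hw1 : ‖z / (R (k+1+i) : ℂ)‖ ≤ 1 :=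
        hw.trans ((div_le_one hRj).mpr (hR4 i))
      have hwn : ‖(z / (R (k+1+i) : ℂ)) ^ (n (k+1+i))‖ ≤ (4 * R k / a)^3 := by
        rw [norm_pow]
        calc ‖z / (R (k+1+i) : ℂ)‖ ^ (n (k+1+i))
            ≤ ‖z / (R (k+1+i) : ℂ)‖ ^ 3 :=
              pow_le_pow_of_le_one (norm_nonneg _) hw1 (hn _ hj1)
          _ ≤ (4 * R k / a)^3 := pow_le_pow_left₀ (norm_nonneg _) hw 3
      set u : ℝ := (1/2) * (4 * R k / a)^3 with hudef
      have hu0 : 0 ≤ u := by positivity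
      have hbase : ‖(1 : ℂ) - (1/2) * (z / (R (k+1+i) : ℂ)) ^ (n (k+1+i))‖ ≤ 1 + u := by
        calc ‖(1 : ℂ) - (1/2) * (z / (R (k+1+i) : ℂ)) ^ (n (k+1+i))‖
            ≤ ‖(1:ℂ)‖ + ‖(1/2 : ℂ) * (z / (R (k+1+i) : ℂ)) ^ (n (k+1+i))‖ := norm_sub_le _ _
          _ = 1 + (1/2) * ‖(z / (R (k+1+i) : ℂ)) ^ (n (k+1+i))‖ := by
              rw [norm_one, norm_mul]
              norm_num
          _ ≤ 1 + u := by
              rw [hudef]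
              have := hwn
              nlinarith
      have hkey : (l (k+1+i) : ℝ) * u ≤ c i := by
        have hla : (l (k+1+i) : ℝ) ≤ a := hl _ hj1
        have hsqi := hsq i
        have ht : (0:ℝ) < 16^i := by positivity
        have hexp : u = 32 * (R k)^3 / a^3 := by
          rw [hudef, div_pow]; ring
        rw [hexp]
        show (l (k+1+i) : ℝ) * (32 * (R k)^3 / a^3) ≤ 2 / R k * (1/16)^i
        rw [← hadef] at hsqi
        have hrhs : 2 / R k * ((1:ℝ)/16)^i = 2 / (R k * 16^i) := by
          rw [div_pow, one_pow]; ring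
        rw [hrhs]
        have hlhs : (l (k+1+i):ℝ) * (32 * (R k)^3 / a^3)
            = ((l (k+1+i):ℝ) * (32 * (R k)^3)) / a^3 := by ring
        rw [hlhs, div_le_div_iff₀ (by positivity) (by positivity)]
        nlinarith [mul_le_mul_of_nonneg_right hla
            (by positivity : (0:ℝ) ≤ 32 * ((R k)^4 * 16^i)),
          mul_le_mul_of_nonneg_left hsqi (by positivity : (0:ℝ) ≤ 2 * a)]
      calc ‖F i‖ = ‖(1 : ℂ) - (1/2) * (z / (R (k+1+i) : ℂ)) ^ (n (k+1+i))‖ ^ (l (k+1+i)) := by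
            rw [hFdef]; simp [norm_pow]
        _ ≤ (1 + u) ^ (l (k+1+i)) := pow_le_pow_left₀ (norm_nonneg _) hbase _
        _ ≤ Real.exp u ^ (l (k+1+i)) := by
            apply pow_le_pow_left₀ (by positivity)
            linarith [Real.add_one_le_exp u]
        _ = Real.exp ((l (k+1+i) : ℝ) * u) := by rw [Real.exp_nat_mul]
        _ ≤ Real.exp (c i) := Real.exp_le_exp.mpr hkey
    -- summability of c and bound on partial sums
    have hcs : Summable c := by
      apply Summable.mul_left
      exact summable_geometric_of_lt_one (by norm_num) (by norm_num)
    have htsum : ∑' i, c i = 32 / (15 * R k) := by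
      rw [hcdef, tsum_mul_left, tsum_geometric_of_lt_one (by norm_num) (by norm_num)]
      norm_num
      ring
    have hsum_le : ∀ s : Finset ℕ, ∑ i ∈ s, c i ≤ 32 / (15 * R k) := by
      intro s
      have := Summable.sum_le_tsum s (fun i _ => hc0 i) hcs
      rwa [htsum] at this
    have hfin : ∀ s : Finset ℕ, ‖∏ i ∈ s, F i‖ ≤ 1 + 8 / R k := by
      intro s
      calc ‖∏ i ∈ s, F i‖ = ∏ i ∈ s, ‖F i‖ := norm_prod s F
        _ ≤ ∏ i ∈ s, Real.exp (c i) :=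
            Finset.prod_le_prod (fun i _ => norm_nonneg _) (fun i _ => hFle i)
        _ = Real.exp (∑ i ∈ s, c i) := by rw [Real.exp_sum]
        _ ≤ Real.exp (32 / (15 * R k)) := Real.exp_le_exp.mpr (hsum_le s)
        _ ≤ 1 + 8 / R k := exp_small (R k) hRk1
    have htend : Filter.Tendsto (fun s : Finset ℕ => ‖∏ i ∈ s, F i‖)
        Filter.atTop (nhds ‖∏' i, F i‖) :=
      (continuous_norm.continuousAt.tendsto.comp hmul.hasProd)
    exact le_of_tendsto htend (Filter.Eventually.of_forall hfin)
  · rw [tprod_eq_one_of_not_multipliable hmul, norm_one]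
    have : 0 ≤ 8 / R k := by positivity
    linarith
end

section
/- Let (R_j) be positive reals with R_{j+1} ≥ 4R_j² (so R_j ≤ √(R_{j+1})/2), let n₀ ≥ 1 and suppose n_j ≥ n₀ + 1 and l_j ≤ R_j for all j. Then for every k ≥ 2, ∏_{j=1}^{k-1} (1 + (R_j/R_k)^{n_j})^{l_j} ≤ 1 + 2 R_k^{-n₀/2}. -/
lemma exp_le_one_add_two_mul (t : ℝ) (h0 : 0 ≤ t) (h1 : t ≤ 1) :
    Real.exp t ≤ 1 + 2 * t := by
  have h := convexOn_exp.2 (Set.mem_univ (0:ℝ)) (Set.mem_univ (1:ℝ))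
    (by linarith : (0:ℝ) ≤ 1 - t) h0 (by ring)
  simp only [smul_eq_mul, mul_zero, mul_one, zero_add, Real.exp_zero] at h
  nlinarith [Real.exp_one_lt_d9]

/-- Product estimate: `∏_{j=1}^{k-1} (1 + (R_j/R_k)^{n_j})^{l_j} ≤ 1 + 2 R_k^{-n₀/2}`. -/
theorem stmt6 (R : ℕ → ℝ) (n l : ℕ → ℕ) (n₀ : ℕ) (hpos : ∀ j, 0 < R j)
    (hrec : ∀ j, 4 * (R j)^2 ≤ R (j+1)) (hn₀ : 1 ≤ n₀)
    (hn : ∀ j, n₀ + 1 ≤ n j) (hl : ∀ j, (l j : ℝ) ≤ R j)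
    (k : ℕ) (hk : 2 ≤ k) :
    ∏ j ∈ Finset.Icc 1 (k-1), (1 + (R j / R k) ^ (n j)) ^ (l j)
      ≤ 1 + 2 * (R k) ^ (-(n₀ : ℝ) / 2) := by
  have hxpos : (0:ℝ) < (R k) ^ (-(n₀ : ℝ) / 2) := Real.rpow_pos_of_pos (hpos k) _
  -- growth lemma
  have key : ∀ i m, 1 ≤ R i → 1 ≤ R (i+m) ∧ 4^m * R i ≤ R (i+m) := by
    intro i m hi
    induction m with
    | zero => simpa using hi
    | succ m ih =>
      obtain ⟨h1, h2⟩ := ih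
      have h3 := hrec (i+m)
      have h4 : (0:ℝ) < 4^m := pow_pos (by norm_num) m
      have h5 := hpos i
      constructor
      · show 1 ≤ R (i+m+1)
        nlinarith
      · show (4:ℝ)^(m+1) * R i ≤ R (i+m+1)
        have he : (4:ℝ)^(m+1) * R i = 4 * (4^m * R i) := by ring
        rw [he]
        nlinarith
  by_cases hR : 1 ≤ R (k-1)
  · -- main case
    have hsq := hrec (k-1)
    have hk1 : k - 1 + 1 = k := by omega
    rw [hk1] at hsq
    have hRk4 : (4:ℝ) ≤ R k := by nlinarith
    set s := Real.sqrt (R k) with hs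
    have hs2 : s^2 = R k := Real.sq_sqrt (hpos k).le
    have hsge2 : (2:ℝ) ≤ s := by nlinarith [Real.sqrt_nonneg (R k)]
    have hspos : (0:ℝ) < s := by linarith
    have hRk1s : 2 * R (k-1) ≤ s := by nlinarith [hpos (k-1)]
    set C : ℝ := (s/2) * (1/(2*s))^(n₀+1) with hC
    have hCpos : 0 < C := by
      apply mul_pos (by linarith)
      exact pow_pos (by positivity) _
    -- per-term bound
    have hterm : ∀ j ∈ Finset.Icc 1 (k-1),
        (l j : ℝ) * (R j / R k) ^ (n j) ≤ C * (1/4)^(k-1-j) := by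
      intro j hj
      simp only [Finset.mem_Icc] at hj
      have hq : (0:ℝ) < (1/4)^(k-1-j) := pow_pos (by norm_num) _
      rcases Nat.eq_zero_or_pos (l j) with h0 | h0
      · rw [h0]
        simp only [Nat.cast_zero, zero_mul]
        positivity
      · have hRj1 : 1 ≤ R j := le_trans (by exact_mod_cast h0) (hl j)
        obtain ⟨-, hgrow⟩ := key j (k-1-j) hRj1
        rw [Nat.add_sub_cancel' hj.2] at hgrow
        have hRjle : R j ≤ (s/2) * (1/4)^(k-1-j) := by
          have h4 : (0:ℝ) < 4^(k-1-j) := pow_pos (by norm_num) _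
          have he : (1/4:ℝ)^(k-1-j) = ((4:ℝ)^(k-1-j))⁻¹ := by
            rw [one_div, inv_pow]
          rw [he, ← div_eq_mul_inv, le_div_iff₀ h4]
          nlinarith
        have hratio : R j / R k ≤ 1/(2*s) := by
          rw [div_le_div_iff₀ (hpos k) (by positivity)]
          have : (1/4:ℝ)^(k-1-j) ≤ 1 := pow_le_one₀ (by norm_num) (by norm_num)
          nlinarith [hpos j]
        have hr0 : 0 ≤ R j / R k := div_nonneg (hpos j).le (hpos k).le
        have hr1 : R j / R k ≤ 1 := le_trans hratio (by
          rw [div_le_one (by positivity)]; linarith)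
        have hpow : (R j / R k) ^ (n j) ≤ (1/(2*s))^(n₀+1) := by
          calc (R j / R k) ^ (n j) ≤ (R j / R k) ^ (n₀+1) :=
                pow_le_pow_of_le_one hr0 hr1 (hn j)
            _ ≤ (1/(2*s))^(n₀+1) := pow_le_pow_left₀ hr0 hratio _
        calc (l j : ℝ) * (R j / R k) ^ (n j)
            ≤ ((s/2) * (1/4)^(k-1-j)) * (1/(2*s))^(n₀+1) := by
              apply mul_le_mul (le_trans (hl j) hRjle) hpow (pow_nonneg hr0 _)
              positivity
          _ = C * (1/4)^(k-1-j) := by ring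
    -- sum bound
    set S : ℝ := ∑ j ∈ Finset.Icc 1 (k-1), (l j : ℝ) * (R j / R k) ^ (n j) with hS
    have hS0 : 0 ≤ S := Finset.sum_nonneg (fun j _ =>
      mul_nonneg (Nat.cast_nonneg _) (pow_nonneg (div_nonneg (hpos j).le (hpos k).le) _))
    have hsum : S ≤ 2 * C := by
      calc S ≤ ∑ j ∈ Finset.Icc 1 (k-1), C * (1/4)^(k-1-j) :=
            Finset.sum_le_sum hterm
        _ = C * ∑ j ∈ Finset.Icc 1 (k-1), (1/4:ℝ)^(k-1-j) := by
            rw [Finset.mul_sum]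
        _ ≤ C * 2 := by
            apply mul_le_mul_of_nonneg_left _ hCpos.le
            have heq : ∑ j ∈ Finset.Icc 1 (k-1), (1/4:ℝ)^(k-1-j)
                = ∑ m ∈ Finset.range (k-1), (1/4:ℝ)^m := by
              apply Finset.sum_nbij' (fun j => k-1-j) (fun m => k-1-m)
              · intro j hj; simp only [Finset.mem_Icc] at hj
                simp only [Finset.mem_range]; omega
              · intro m hm; simp only [Finset.mem_range] at hm
                simp only [Finset.mem_Icc]; omega
              · intro j hj; simp only [Finset.mem_Icc] at hj; omega
              · intro m hm; simp only [Finset.mem_range] at hm; omega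
              · intro j hj; rfl
            rw [heq]
            calc ∑ m ∈ Finset.range (k-1), (1/4:ℝ)^m
                ≤ ∑ m ∈ Finset.range (k-1), (1/2:ℝ)^m :=
                  Finset.sum_le_sum (fun m _ =>
                    pow_le_pow_left₀ (by norm_num) (by norm_num) m)
              _ ≤ 2 := by
                  have := sum_geometric_two_le (k-1)
                  simpa [one_div] using this
        _ = 2 * C := by ring
    -- identify x
    have hx : (R k) ^ (-(n₀ : ℝ) / 2) = (s ^ n₀)⁻¹ := by
      rw [hs, Real.sqrt_eq_rpow, ← Real.rpow_natCast (R k ^ (1/2:ℝ)) n₀,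
        ← Real.rpow_mul (hpos k).le, ← Real.rpow_neg (hpos k).le]
      congr 1
      ring
    have hspow : (2:ℝ) ≤ s ^ n₀ := by
      calc (2:ℝ) = 2^1 := by norm_num
        _ ≤ 2^n₀ := pow_le_pow_right₀ (by norm_num) hn₀
        _ ≤ s^n₀ := pow_le_pow_left₀ (by norm_num) hsge2 n₀
    have hCx : 2 * C ≤ (R k) ^ (-(n₀ : ℝ) / 2) / 4 := by
      rw [hx, hC]
      have h2s : (0:ℝ) < 2 * s := by linarith
      have hexp : (1/(2*s))^(n₀+1) = ((2*s)^(n₀+1))⁻¹ := by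
        rw [one_div, inv_pow]
      rw [hexp]
      rw [div_eq_mul_inv ((s:ℝ)^n₀)⁻¹ 4] at *
      have hkey : 2 * (s / 2 * ((2*s)^(n₀+1))⁻¹) = (s^n₀)⁻¹ * (2^(n₀+1))⁻¹ := by
        rw [mul_pow]
        field_simp
        ring
      rw [hkey]
      have h4 : (4:ℝ) ≤ 2^(n₀+1) := by
        calc (4:ℝ) = 2^2 := by norm_num
          _ ≤ 2^(n₀+1) := pow_le_pow_right₀ (by norm_num) (by omega)
      apply mul_le_mul_of_nonneg_left _ (by positivity)
      rw [inv_le_inv₀ (by positivity) (by norm_num)]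
      exact h4
    have hxle : (R k) ^ (-(n₀ : ℝ) / 2) ≤ 1 := by
      rw [hx]
      rw [inv_le_one_iff₀]
      right; linarith
    -- finish
    have hprod : ∏ j ∈ Finset.Icc 1 (k-1), (1 + (R j / R k) ^ (n j)) ^ (l j)
        ≤ Real.exp S := by
      rw [hS, Real.exp_sum]
      apply Finset.prod_le_prod
      · intro j _
        have ha : (0:ℝ) ≤ (R j / R k) ^ (n j) :=
          pow_nonneg (div_nonneg (hpos j).le (hpos k).le) _
        positivity
      · intro j _
        have ha : (0:ℝ) ≤ (R j / R k) ^ (n j) :=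
          pow_nonneg (div_nonneg (hpos j).le (hpos k).le) _
        calc (1 + (R j / R k) ^ (n j)) ^ (l j)
            ≤ (Real.exp ((R j / R k) ^ (n j))) ^ (l j) := by
              apply pow_le_pow_left₀ (by linarith)
              linarith [Real.add_one_le_exp ((R j / R k) ^ (n j))]
          _ = Real.exp ((l j : ℝ) * (R j / R k) ^ (n j)) := by
              rw [← Real.exp_nat_mul]
    have hS1 : S ≤ 1 := by
      have := hxle
      linarith [hCx, hsum]
    calc ∏ j ∈ Finset.Icc 1 (k-1), (1 + (R j / R k) ^ (n j)) ^ (l j)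
        ≤ Real.exp S := hprod
      _ ≤ 1 + 2 * S := exp_le_one_add_two_mul S hS0 hS1
      _ ≤ 1 + 2 * (R k) ^ (-(n₀ : ℝ) / 2) := by
          have : S ≤ (R k) ^ (-(n₀ : ℝ) / 2) := by linarith [hsum, hCx, hxpos]
          linarith
  · -- trivial case: all l j = 0
    have hzero : ∀ j ∈ Finset.Icc 1 (k-1), l j = 0 := by
      intro j hj
      simp only [Finset.mem_Icc] at hj
      by_contra h
      have h1 : 1 ≤ l j := Nat.one_le_iff_ne_zero.mpr h
      have hRj1 : 1 ≤ R j := le_trans (by exact_mod_cast h1) (hl j)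
      obtain ⟨hR1, -⟩ := key j (k-1-j) hRj1
      rw [Nat.add_sub_cancel' hj.2] at hR1
      exact hR hR1
    have : ∏ j ∈ Finset.Icc 1 (k-1), (1 + (R j / R k) ^ (n j)) ^ (l j) = 1 := by
      apply Finset.prod_eq_one
      intro j hj
      rw [hzero j hj, pow_zero]
    rw [this]
    linarith
end

section
/- Define T₂(z) = 2z² − 1, z₂ = −1/√2, D₂ = D(z₂, 1 − 1/√2) and D̃₂ = D(z₂, 1/√2) (open disks). Then |T₂(z)| ≥ 1 for all z on the circle ∂D̃₂ and |T₂(z)| ≤ 1 for all z on the circle ∂D₂. -/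
lemma sqrt2_facts : (0:ℝ) < Real.sqrt 2 ∧ Real.sqrt 2 ^ 2 = 2 :=
  ⟨Real.sqrt_pos.mpr (by norm_num), Real.sq_sqrt (by norm_num)⟩

lemma key_factor (z : ℂ) :
    2 * z ^ 2 - 1 =
      2 * (z - ((-(1 / Real.sqrt 2) : ℝ) : ℂ)) *
        ((z - ((-(1 / Real.sqrt 2) : ℝ) : ℂ)) - (Real.sqrt 2 : ℝ)) := by
  have h2 : ((Real.sqrt 2 : ℝ) : ℂ) ^ 2 = 2 := by
    norm_cast
    exact sqrt2_facts.2
  have hne : ((Real.sqrt 2 : ℝ) : ℂ) ≠ 0 := by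
    norm_cast
    exact ne_of_gt sqrt2_facts.1
  push_cast
  field_simp
  linear_combination (1 + 2*z*((Real.sqrt 2 : ℝ) : ℂ)) * h2

lemma norm_T2 (z : ℂ) (r : ℝ) (h : dist z ((-(1 / Real.sqrt 2) : ℝ) : ℂ) = r) :
    ‖2 * z ^ 2 - 1‖ = 2 * r * ‖(z - ((-(1 / Real.sqrt 2) : ℝ) : ℂ)) - (Real.sqrt 2 : ℝ)‖ := by
  rw [key_factor z, norm_mul, norm_mul]
  rw [dist_eq_norm] at h
  rw [h]
  norm_num

/-- For `T₂(z) = 2z² - 1` and `z₂ = -1/√2`: `|T₂| ≥ 1` on the circle of center `z₂`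
and radius `1/√2`, and `|T₂| ≤ 1` on the circle of center `z₂` and radius `1 - 1/√2`. -/
theorem stmt7 :
    (∀ z ∈ Metric.sphere ((-(1 / Real.sqrt 2) : ℝ) : ℂ) (1 / Real.sqrt 2),
      1 ≤ ‖2 * z^2 - 1‖) ∧
    (∀ z ∈ Metric.sphere ((-(1 / Real.sqrt 2) : ℝ) : ℂ) (1 - 1 / Real.sqrt 2),
      ‖2 * z^2 - 1‖ ≤ 1) := by
  obtain ⟨hpos, hsq⟩ := sqrt2_facts
  set s := Real.sqrt 2 with hs
  have hnorm_s : ‖((s:ℝ):ℂ)‖ = s := by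
    rw [Complex.norm_real, Real.norm_eq_abs, abs_of_pos hpos]
  constructor
  · intro z hz
    rw [Metric.mem_sphere] at hz
    rw [norm_T2 z _ hz]
    have hw : ‖z - ((-(1 / s) : ℝ) : ℂ)‖ = 1 / s := by
      rw [← dist_eq_norm]; exact hz
    have htri : s - 1 / s ≤ ‖(z - ((-(1 / s) : ℝ) : ℂ)) - ((s:ℝ):ℂ)‖ := by
      calc s - 1 / s = ‖((s:ℝ):ℂ)‖ - ‖z - ((-(1 / s) : ℝ) : ℂ)‖ := by rw [hnorm_s, hw]
        _ ≤ ‖((s:ℝ):ℂ) - (z - ((-(1 / s) : ℝ) : ℂ))‖ := norm_sub_norm_le _ _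
        _ = ‖(z - ((-(1 / s) : ℝ) : ℂ)) - ((s:ℝ):ℂ)‖ := norm_sub_rev _ _
    have h1 : s - 1 / s = 1 / s := by field_simp; nlinarith
    nlinarith [htri, mul_pos hpos hpos]
  · intro z hz
    rw [Metric.mem_sphere] at hz
    rw [norm_T2 z _ hz]
    have hw : ‖z - ((-(1 / s) : ℝ) : ℂ)‖ = 1 - 1 / s := by
      rw [← dist_eq_norm]; exact hz
    have hr : 0 ≤ 1 - 1 / s := by
      have : 1 ≤ s := by nlinarith
      have : 1 / s ≤ 1 := by rw [div_le_one hpos]; exact this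
      linarith
    have htri : ‖(z - ((-(1 / s) : ℝ) : ℂ)) - ((s:ℝ):ℂ)‖ ≤ (1 - 1 / s) + s := by
      calc ‖(z - ((-(1 / s) : ℝ) : ℂ)) - ((s:ℝ):ℂ)‖
          ≤ ‖z - ((-(1 / s) : ℝ) : ℂ)‖ + ‖((s:ℝ):ℂ)‖ := norm_sub_le _ _
        _ = (1 - 1 / s) + s := by rw [hw, hnorm_s]
    have key : 2 * (1 - 1 / s) * ((1 - 1 / s) + s) = 1 := by
      field_simp; nlinarith
    nlinarith [mul_le_mul_of_nonneg_left htri (by linarith : (0:ℝ) ≤ 2 * (1 - 1/s))]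
end

section
/- Suppose g is holomorphic on the closed annulus W = {a ≤ |z| ≤ b} (0 < a < b) and continuous up to the boundary, |g(z)| ≤ c for |z| = a and |g(z)| ≥ d for |z| = b, where c < d. Then the open annulus U = {c < |z| < d} is contained in g(W). -/
open Set Metric Filter Topology

lemma preconn_annulus {s : Set ℝ} (hs : IsPreconnected s) (hpos : ∀ t ∈ s, 0 < t) :
    IsPreconnected {z : ℂ | ‖z‖ ∈ s} := by
  have hrank : (1 : Cardinal) < Module.rank ℝ ℂ := by
    rw [Complex.rank_real_complex]; exact Cardinal.one_lt_two
  have hsph := isPreconnected_sphere hrank (0 : ℂ) 1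
  have hprod := hs.prod hsph
  have himg := hprod.image (fun p : ℝ × ℂ => p.1 • p.2)
    ((continuous_fst.smul continuous_snd).continuousOn)
  convert himg using 1
  ext z
  constructor
  · intro hz
    have hz0 : ‖z‖ ≠ 0 := (hpos _ hz).ne'
    refine ⟨(‖z‖, ‖z‖⁻¹ • z), ⟨hz, ?_⟩, ?_⟩
    · simp only [mem_sphere_iff_norm, sub_zero]
      rw [norm_smul, norm_inv, norm_norm, inv_mul_cancel₀ hz0]
    · simp only [smul_smul]
      rw [mul_inv_cancel₀ hz0, one_smul]
  · rintro ⟨⟨t, u⟩, ⟨ht, hu⟩, rfl⟩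
    have hu1 : ‖u‖ = 1 := by simpa using hu
    have hnorm : ‖t • u‖ = t := by
      rw [norm_smul, hu1, mul_one, Real.norm_eq_abs, abs_of_pos (hpos _ ht)]
    show ‖t • u‖ ∈ s
    rw [hnorm]; exact ht

lemma norm_ofReal_of_nonneg {t : ℝ} (ht : 0 ≤ t) : ‖(t : ℂ)‖ = t := by
  simp [abs_of_nonneg ht]

/-- If `g` is holomorphic on the annulus `{a ≤ |z| ≤ b}` (holomorphic inside,
continuous up to the boundary), `|g| ≤ c` on the inner circle and `|g| ≥ d` on the
outer circle with `c < d`, then the annulus `{c < |w| < d}` is contained in the image. -/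
theorem stmt16 (a b c d : ℝ) (ha : 0 < a) (hab : a < b) (hc : 0 ≤ c) (hcd : c < d)
    (g : ℂ → ℂ)
    (hg : DifferentiableOn ℂ g {z : ℂ | a < ‖z‖ ∧ ‖z‖ < b})
    (hgc : ContinuousOn g {z : ℂ | a ≤ ‖z‖ ∧ ‖z‖ ≤ b})
    (hinner : ∀ z : ℂ, ‖z‖ = a → ‖g z‖ ≤ c)
    (houter : ∀ z : ℂ, ‖z‖ = b → d ≤ ‖g z‖) :
    {w : ℂ | c < ‖w‖ ∧ ‖w‖ < d} ⊆ g '' {z : ℂ | a ≤ ‖z‖ ∧ ‖z‖ ≤ b} := by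
  set W : Set ℂ := {z : ℂ | a ≤ ‖z‖ ∧ ‖z‖ ≤ b} with hW
  set Wo : Set ℂ := {z : ℂ | a < ‖z‖ ∧ ‖z‖ < b} with hWo
  set U : Set ℂ := {w : ℂ | c < ‖w‖ ∧ ‖w‖ < d} with hU
  have hb : (0:ℝ) < b := lt_trans ha hab
  have hWeq : W = (fun z : ℂ => ‖z‖) ⁻¹' Icc a b := by ext z; simp [hW, Icc]
  have hWoeq : Wo = (fun z : ℂ => ‖z‖) ⁻¹' Ioo a b := by ext z; simp [hWo, Ioo]
  have hWoopen : IsOpen Wo := by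
    rw [hWoeq]; exact isOpen_Ioo.preimage continuous_norm
  have hWclosed : IsClosed W := by
    rw [hWeq]; exact isClosed_Icc.preimage continuous_norm
  have hWsub : Wo ⊆ W := fun z hz => ⟨le_of_lt hz.1, le_of_lt hz.2⟩
  have hWcompact : IsCompact W := by
    refine Metric.isCompact_of_isClosed_isBounded hWclosed ?_
    refine (Metric.isBounded_closedBall (x := (0:ℂ)) (r := b)).subset ?_
    intro z hz
    simpa [Metric.mem_closedBall, Complex.dist_eq] using hz.2
  have hWpre : IsPreconnected W := by
    rw [hWeq]
    exact preconn_annulus isPreconnected_Icc (fun t ht => lt_of_lt_of_le ha ht.1)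
  have hWopre : IsPreconnected Wo := by
    rw [hWoeq]
    exact preconn_annulus isPreconnected_Ioo (fun t ht => lt_trans ha ht.1)
  have hUpre : IsPreconnected U := by
    have hUeq : U = (fun z : ℂ => ‖z‖) ⁻¹' Ioo c d := by ext z; simp [hU, Ioo]
    rw [hUeq]
    exact preconn_annulus isPreconnected_Ioo (fun t ht => lt_of_le_of_lt hc ht.1)
  have hmemW : ∀ t : ℝ, a ≤ t → t ≤ b → (t : ℂ) ∈ W := by
    intro t hat htb
    have h := norm_ofReal_of_nonneg (le_trans ha.le hat)
    exact ⟨by rw [h]; exact hat, by rw [h]; exact htb⟩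
  have haW : (a : ℂ) ∈ W := hmemW a le_rfl hab.le
  have hbW : (b : ℂ) ∈ W := hmemW b hab.le le_rfl
  have hna : ‖(a:ℂ)‖ = a := norm_ofReal_of_nonneg ha.le
  have hnb : ‖(b:ℂ)‖ = b := norm_ofReal_of_nonneg hb.le
  -- g is not constant on Wo
  have hnotconst : ¬ ∃ w, ∀ z ∈ Wo, g z = w := by
    rintro ⟨w, hw⟩
    have key : ∀ t : ℝ, a ≤ t → t ≤ b → g t = w := by
      intro t hat htb
      have htW : (t : ℂ) ∈ W := hmemW t hat htb
      have hne : (𝓝[Ioo a b] t).NeBot := by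
        refine mem_closure_iff_nhdsWithin_neBot.mp ?_
        rw [closure_Ioo hab.ne]; exact ⟨hat, htb⟩
      have h1 : Filter.Tendsto (fun s : ℝ => g s) (𝓝[Ioo a b] t) (𝓝 (g t)) := by
        have hco : Filter.Tendsto (fun s : ℝ => (s : ℂ)) (𝓝[Ioo a b] t) (𝓝[W] (t : ℂ)) := by
          apply tendsto_nhdsWithin_of_tendsto_nhds_of_eventually_within
          · exact Complex.continuous_ofReal.continuousWithinAt
          · filter_upwards [self_mem_nhdsWithin] with s hs
            exact hmemW s hs.1.le hs.2.le
        exact (hgc _ htW).tendsto.comp hco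
      have h2 : Filter.Tendsto (fun s : ℝ => g s) (𝓝[Ioo a b] t) (𝓝 w) := by
        refine Filter.Tendsto.congr' ?_ tendsto_const_nhds
        filter_upwards [self_mem_nhdsWithin] with s hs
        refine (hw _ ?_).symm
        have h := norm_ofReal_of_nonneg (le_trans ha.le hs.1.le)
        exact ⟨by rw [h]; exact hs.1, by rw [h]; exact hs.2⟩
      exact tendsto_nhds_unique h1 h2
    have h1 : ‖w‖ ≤ c := by rw [← key a le_rfl hab.le]; exact hinner _ hna
    have h2 : d ≤ ‖w‖ := by rw [← key b hab.le le_rfl]; exact houter _ hnb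
    linarith
  -- open mapping theorem
  have hOopen : IsOpen (g '' Wo) := by
    have hana : AnalyticOnNhd ℂ g Wo := hg.analyticOnNhd hWoopen
    rcases hana.is_constant_or_isOpen hWopre with h | h
    · exact absurd h hnotconst
    · exact h Wo le_rfl hWoopen
  have hKcompact : IsCompact (g '' W) := hWcompact.image_of_continuousOn hgc
  -- nonemptiness: some point of U is attained
  have hne : (U ∩ g '' Wo).Nonempty := by
    set t : ℝ := (c + d) / 2 with htdef
    have hct : c < t := by rw [htdef]; linarith
    have htd : t < d := by rw [htdef]; linarith
    have hIVT : t ∈ (fun z => ‖g z‖) '' W := by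
      have hcont : ContinuousOn (fun z => ‖g z‖) W := hgc.norm
      have := hWpre.intermediate_value haW hbW hcont
      apply this
      have h1 : ‖g (a:ℂ)‖ ≤ c := hinner _ hna
      have h2 : d ≤ ‖g (b:ℂ)‖ := houter _ hnb
      exact ⟨le_trans h1 hct.le, le_trans htd.le h2⟩
    obtain ⟨z, hzW, hzt'⟩ := hIVT
    have hzt : ‖g z‖ = t := hzt'
    have hzWo : z ∈ Wo := by
      rcases lt_or_eq_of_le hzW.1 with h | h
      · rcases lt_or_eq_of_le hzW.2 with h' | h'
        · exact ⟨h, h'⟩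
        · exact absurd (houter z h') (by rw [hzt]; push_neg; linarith)
      · exact absurd (hinner z h.symm) (by rw [hzt]; push_neg; linarith)
    exact ⟨g z, ⟨by rw [hzt]; exact hct, by rw [hzt]; exact htd⟩, ⟨z, hzWo, rfl⟩⟩
  -- clopen argument on U
  intro w hwU
  by_contra hwK
  have hcover : U ⊆ g '' Wo ∪ (g '' W)ᶜ := by
    intro u hu
    by_cases hK : u ∈ g '' W
    · left
      obtain ⟨z, hzW, rfl⟩ := hK
      refine ⟨z, ?_, rfl⟩
      rcases lt_or_eq_of_le hzW.1 with h | h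
      · rcases lt_or_eq_of_le hzW.2 with h' | h'
        · exact ⟨h, h'⟩
        · exact absurd (houter z h') (not_le.mpr hu.2)
      · exact absurd (hinner z h.symm) (not_le.mpr hu.1)
    · right; exact hK
  have hdisj : ¬ (U ∩ (g '' Wo ∩ (g '' W)ᶜ)).Nonempty := by
    rintro ⟨u, _, huO, huK⟩
    exact huK (image_mono hWsub huO)
  have hne2 : (U ∩ (g '' W)ᶜ).Nonempty := ⟨w, hwU, hwK⟩
  exact hdisj (hUpre _ _ hOopen hKcompact.isClosed.isOpen_compl hcover hne hne2)
end
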